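/- Let R be a commutative ring and c : ℤ → R. For integers k ≥ 1 and α ∈ ℤ define the Hankel determinant τ_k^{(α)} = det of the k×k matrix whose (i,j) entry (0 ≤ i,j ≤ k−1) is c(α+i+j); set τ_0^{(α)} = 1 and τ_{−1}^{(α)} = 0. Then for all k ≥ 0 and all α ∈ ℤ: (τ_k^{(α)})² = τ_k^{(α−1)} · τ_k^{(α+1)} − τ_{k+1}^{(α−1)} · τ_{k−1}^{(α+1)}. -/

import Mathlib

/-!
The 2Q-system is the Desnanot–Jacobi identity for the `(k + 1) × (k + 1)` Hankel matrix
`(c (α - 1 + i + j))`: deleting its first or last row and column gives the Hankel matrices of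
`τ_k^{(α+1)}`, `τ_k^{(α-1)}` and (twice) `τ_k^{(α)}`, and deleting both gives that of
`τ_{k-1}^{(α+1)}`.

Desnanot–Jacobi is Jacobi's theorem on complementary minors of the adjugate, for the `2 × 2`
corner block. Multiplying `A` by the identity with its leading block column replaced by that of
`adj A` gives a block triangular matrix, whence `det A * det (adj A)₁₁ = det A ^ 2 * det A₂₂`.
The factor `det A` is cancelled for the generic matrix over `ℤ[x_ij]`, and the identity is then
specialised.
-/

/-- The `GL₂`-hat tau-function: the shifted `k × k` Hankel determinant with `(i,j)`
entry `c (α + i + j)` for `k ≥ 0` (so `τ_0 = 1`), and `0` for `k < 0`. -/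
noncomputable def tau2Q {R : Type*} [CommRing R] (c : ℤ → R) (k α : ℤ) : R :=
  if k < 0 then 0
  else Matrix.det
    (Matrix.of fun i j : Fin k.toNat => c (α + ((i : ℕ) : ℤ) + ((j : ℕ) : ℤ)))

noncomputable def Fin.endsSumInteriorEquiv (n : ℕ) : Fin 2 ⊕ Fin n ≃ Fin (n + 2) :=
  Equiv.ofBijective (Sum.elim ![0, Fin.last (n + 1)] fun k => k.castSucc.succ) <| by
    rw [Fintype.bijective_iff_injective_and_card]
    refine ⟨?_, by simp [add_comm]⟩
    rintro (a | a) (b | b) h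
    · fin_cases a <;> fin_cases b <;> simp_all [Fin.ext_iff]
    · have := b.isLt
      fin_cases a <;> simp [Fin.ext_iff] at h
      omega
    · have := a.isLt
      fin_cases b <;> simp [Fin.ext_iff] at h
      omega
    · simpa [Fin.ext_iff] using h

namespace Matrix

variable {R : Type*} [CommRing R]

section Blocks

variable {p q : Type*} [Fintype p] [Fintype q] [DecidableEq p] [DecidableEq q]

theorem det_mul_det_toBlocks₁₁_adjugate (A : Matrix (p ⊕ q) (p ⊕ q) R) :
    A.det * A.adjugate.toBlocks₁₁.det = A.det ^ Fintype.card p * A.toBlocks₂₂.det := by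
  set d := A.det
  set B := A.adjugate
  have hAB : A * B = d • (1 : Matrix (p ⊕ q) (p ⊕ q) R) := mul_adjugate A
  rw [← fromBlocks_toBlocks A, ← fromBlocks_toBlocks B, fromBlocks_multiply,
    ← fromBlocks_one, fromBlocks_smul, fromBlocks_inj] at hAB
  obtain ⟨h₁₁, -, h₂₁, -⟩ := hAB
  calc d * B.toBlocks₁₁.det
      = (A * fromBlocks B.toBlocks₁₁ 0 B.toBlocks₂₁ 1).det := by
        rw [det_mul, det_fromBlocks_zero₁₂, det_one, mul_one]
    _ = (fromBlocks (d • 1) A.toBlocks₁₂ 0 A.toBlocks₂₂).det := by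
        conv_lhs => rw [← fromBlocks_toBlocks A]
        rw [fromBlocks_multiply, h₁₁, h₂₁]
        simp only [Matrix.mul_zero, Matrix.mul_one, zero_add, smul_zero]
    _ = d ^ Fintype.card p * A.toBlocks₂₂.det := by
        rw [det_fromBlocks_zero₂₁, det_smul, det_one, mul_one]

/-- Jacobi's complementary minor theorem, for a leading block. -/
theorem det_toBlocks₁₁_adjugate [Nonempty p] (A : Matrix (p ⊕ q) (p ⊕ q) R) :
    A.adjugate.toBlocks₁₁.det = A.det ^ (Fintype.card p - 1) * A.toBlocks₂₂.det := by
  let X := mvPolynomialX (p ⊕ q) (p ⊕ q) ℤ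
  suffices X.adjugate.toBlocks₁₁.det = X.det ^ (Fintype.card p - 1) * X.toBlocks₂₂.det by
    have h := congrArg (MvPolynomial.aeval fun x : (p ⊕ q) × (p ⊕ q) => A x.1 x.2) this
    simp only [AlgHom.map_det, map_mul, map_pow] at h
    rwa [← mvPolynomialX_mapMatrix_aeval ℤ A, ← AlgHom.map_adjugate]
  apply mul_left_cancel₀ (det_mvPolynomialX_ne_zero (p ⊕ q) ℤ)
  rw [det_mul_det_toBlocks₁₁_adjugate, ← mul_assoc, ← pow_succ',
    Nat.sub_add_cancel Fintype.card_pos]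

end Blocks

theorem desnanot_jacobi {n : ℕ} (A : Matrix (Fin (n + 2)) (Fin (n + 2)) R) :
    A.det * (A.submatrix (fun i : Fin n => i.castSucc.succ) fun i => i.castSucc.succ).det =
      (A.submatrix Fin.succ Fin.succ).det * (A.submatrix Fin.castSucc Fin.castSucc).det -
        (A.submatrix Fin.succ Fin.castSucc).det * (A.submatrix Fin.castSucc Fin.succ).det := by
  let e := Fin.endsSumInteriorEquiv n
  have h := det_toBlocks₁₁_adjugate (A.submatrix e e)
  rw [adjugate_submatrix_equiv_self, det_fin_two, det_submatrix_equiv_self] at h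
  change _ = A.det ^ 1 * (A.submatrix (fun i : Fin n => i.castSucc.succ) _).det at h
  simp only [toBlocks₁₁, e, Fin.endsSumInteriorEquiv, Equiv.coe_ofBijective, of_apply,
    submatrix_apply, Sum.elim_inl, Sum.elim_inr, cons_val_zero, cons_val_one, cons_val_fin_one,
    adjugate_fin_succ_eq_det_submatrix, Fin.succAbove_zero, Fin.succAbove_last, Fin.val_zero,
    Fin.val_last] at h
  have hsign : ((-1 : R) ^ n) ^ 2 = 1 := by
    rw [← pow_mul]
    exact Even.neg_one_pow ⟨n, by ring⟩
  linear_combination -h + ((A.submatrix Fin.succ Fin.succ).det *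
    (A.submatrix Fin.castSucc Fin.castSucc).det - (A.submatrix Fin.castSucc Fin.succ).det *
    (A.submatrix Fin.succ Fin.castSucc).det) * hsign

section Hankel

variable {α : Type*} (c : ℤ → α)

def hankel (a : ℤ) (n : ℕ) : Matrix (Fin n) (Fin n) α :=
  of fun i j => c (a + i + j)

theorem submatrix_hankel {m n : ℕ} {a b : ℤ} (f g : Fin m → Fin n) (s t : ℕ)
    (hf : ∀ i, (f i : ℕ) = i + s) (hg : ∀ j, (g j : ℕ) = j + t) (hb : a + s + t = b) :
    (hankel c a n).submatrix f g = hankel c b m := by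
  ext i j
  simp only [hankel, submatrix_apply, of_apply, hf, hg, ← hb]
  congr 1
  push_cast
  ring

end Hankel

theorem det_hankel_sq (c : ℤ → R) (a : ℤ) (n : ℕ) :
    (hankel c a (n + 1)).det ^ 2 =
      (hankel c (a - 1) (n + 1)).det * (hankel c (a + 1) (n + 1)).det -
        (hankel c (a - 1) (n + 2)).det * (hankel c (a + 1) n).det := by
  have h := desnanot_jacobi (hankel c (a - 1) (n + 2))
  let inner : Fin n → Fin (n + 2) := fun i => i.castSucc.succ
  rw [submatrix_hankel c inner inner 1 1 (fun _ => rfl) (fun _ => rfl) (b := a + 1) (by ring),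
    submatrix_hankel c Fin.succ Fin.succ 1 1 (fun _ => rfl) (fun _ => rfl) (b := a + 1) (by ring),
    submatrix_hankel c Fin.castSucc Fin.castSucc 0 0 (fun _ => rfl) (fun _ => rfl) (b := a - 1)
      (by ring),
    submatrix_hankel c Fin.succ Fin.castSucc 1 0 (fun _ => rfl) (fun _ => rfl) (b := a) (by ring),
    submatrix_hankel c Fin.castSucc Fin.succ 0 1 (fun _ => rfl) (fun _ => rfl) (b := a) (by ring)]
    at h
  linear_combination h

end Matrix

theorem tau2Q_natCast {R : Type*} [CommRing R] (c : ℤ → R) (n : ℕ) (α : ℤ) :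
    tau2Q c n α = (Matrix.hankel c α n).det := by
  rw [tau2Q, if_neg (by omega)]
  rfl

/-- The Hankel tau-functions `τ_k^{(α)}` satisfy the 2Q-system (the type A Q-system). -/
theorem tau2Q_system
    (R : Type*) [CommRing R] (c : ℤ → R) :
    ∀ k : ℤ, 0 ≤ k → ∀ α : ℤ,
      (tau2Q c k α) ^ 2
      = tau2Q c k (α - 1) * tau2Q c k (α + 1)
        - tau2Q c (k + 1) (α - 1) * tau2Q c (k - 1) (α + 1) := by
  intro k hk α
  lift k to ℕ using hk
  rcases k with _ | n
  · simp [tau2Q]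
  · rw [show ((n + 1 : ℕ) : ℤ) + 1 = (n + 2 : ℕ) by push_cast; ring,
      show ((n + 1 : ℕ) : ℤ) - 1 = n by push_cast; ring]
    simp only [tau2Q_natCast]
    exact Matrix.det_hankel_sq c α n
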